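/- arXiv:2002.06028 — 4 statements merged into one kernel-verified Lean document; each statement's English description precedes it below -/
import Mathlib

section
/- Let S ⊆ V be nonempty with V∖S also nonempty, and define γ_S = max_{x ∈ Δ_{V∖S}} min_{i ∈ S} (xᵀAx − (Ax)_i)/(xᵀx). If α > γ_S and x is a local maximizer of f_S^α on Δ, then σ(x) ∩ S ≠ ∅. -/
/-!
If `x` avoided `S`, it would lie on the face `Δ_{V∖S}`, so some `i ∈ S` satisfies
`xᵀAx − (Ax)_i ≤ γ_S · xᵀx < α · xᵀx`. Since `x` vanishes on `S`, the penalty `α Î_S` acts on `x`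
as `α · id` and not at all on coordinate `i`, so this says `((A − α Î_S) x)_i > f_S^α(x)`:
moving from `x` towards the vertex `e_i` increases `f_S^α` to first order, contradicting the
local maximality of `x`.
-/

open Matrix Filter Topology Set

section QuadraticForm

variable {ι : Type*} [Fintype ι]

theorem setOf_sum_eq_one_and_nonneg_eq_stdSimplex :
    {y : ι → ℝ | ∑ i, y i = 1 ∧ ∀ i, 0 ≤ y i} = stdSimplex ℝ ι :=
  Set.ext fun _ => and_comm

theorem dotProduct_self_pos_of_mem_stdSimplex {y : ι → ℝ} (hy : y ∈ stdSimplex ℝ ι) :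
    0 < y ⬝ᵥ y := by
  have hy0 : y ≠ 0 := by
    rintro rfl
    simpa using hy.2
  exact lt_of_le_of_ne (Finset.sum_nonneg fun i _ => mul_self_nonneg (y i))
    (Ne.symm (dotProduct_self_eq_zero.not.2 hy0))

theorem Matrix.IsSymm.dotProduct_mulVec_comm {M : Matrix ι ι ℝ} (hM : M.IsSymm) (u w : ι → ℝ) :
    u ⬝ᵥ M *ᵥ w = w ⬝ᵥ M *ᵥ u := by
  rw [dotProduct_mulVec, ← mulVec_transpose, hM.eq, dotProduct_comm]

theorem dotProduct_mulVec_add_smul (M : Matrix ι ι ℝ) (x v : ι → ℝ) (t : ℝ) :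
    (x + t • v) ⬝ᵥ M *ᵥ (x + t • v) =
      x ⬝ᵥ M *ᵥ x + t * (x ⬝ᵥ M *ᵥ v + v ⬝ᵥ M *ᵥ x) + t ^ 2 * (v ⬝ᵥ M *ᵥ v) := by
  simp only [mulVec_add, mulVec_smul, dotProduct_add, add_dotProduct, dotProduct_smul,
    smul_dotProduct, smul_eq_mul]
  ring

theorem eventually_lt_add_mul_add_sq_mul {a b c : ℝ} (hb : 0 < b) :
    ∀ᶠ t in 𝓝[>] 0, a < a + t * b + t ^ 2 * c := by
  have hlin : ∀ᶠ t in 𝓝 (0 : ℝ), 0 < b + t * c := by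
    have hcont : Continuous fun t : ℝ => b + t * c := by fun_prop
    exact hcont.continuousAt.eventually (lt_mem_nhds (by simpa using hb))
  filter_upwards [self_mem_nhdsWithin, nhdsWithin_le_nhds hlin] with t (ht : 0 < t) hbt
  nlinarith [mul_pos ht hbt]

/-- First-order optimality condition for a quadratic form on the standard simplex. -/
theorem IsLocalMaxOn.mulVec_apply_le_of_stdSimplex {M : Matrix ι ι ℝ} (hM : M.IsSymm)
    {x : ι → ℝ} (hx : x ∈ stdSimplex ℝ ι)
    (hmax : IsLocalMaxOn (fun y => y ⬝ᵥ M *ᵥ y) (stdSimplex ℝ ι) x) (i : ι) :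
    (M *ᵥ x) i ≤ x ⬝ᵥ M *ᵥ x := by
  classical
  by_contra! h
  set v : ι → ℝ := Pi.single i 1 - x
  have hpath : Tendsto (fun t : ℝ => x + t • v) (𝓝[>] 0) (𝓝[stdSimplex ℝ ι] x) := by
    refine tendsto_nhdsWithin_iff.2 ⟨?_, ?_⟩
    · have hcont : Continuous fun t : ℝ => x + t • v := by fun_prop
      simpa using (hcont.tendsto 0).mono_left nhdsWithin_le_nhds
    · filter_upwards [Ioo_mem_nhdsGT one_pos] with t ht
      exact (convex_stdSimplex ℝ ι).add_smul_sub_mem hx (single_mem_stdSimplex ℝ i)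
        (Ioo_subset_Icc_self ht)
  have hslope : 0 < x ⬝ᵥ M *ᵥ v + v ⬝ᵥ M *ᵥ x := by
    have hv : v ⬝ᵥ M *ᵥ x = (M *ᵥ x) i - x ⬝ᵥ M *ᵥ x := by
      rw [sub_dotProduct, single_dotProduct, one_mul]
    rw [hM.dotProduct_mulVec_comm x v, hv]
    linarith
  obtain ⟨t, hle, hlt⟩ := ((hpath.eventually hmax).and
    (eventually_lt_add_mul_add_sq_mul (a := x ⬝ᵥ M *ᵥ x) (c := v ⬝ᵥ M *ᵥ v) hslope)).exists
  simp only [dotProduct_mulVec_add_smul] at hle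
  linarith

theorem continuousOn_inf'_div_dotProduct_self (A : Matrix ι ι ℝ) {S : Finset ι}
    (hS : S.Nonempty) :
    ContinuousOn (fun y : ι → ℝ => S.inf' hS fun i => (y ⬝ᵥ A *ᵥ y - (A *ᵥ y) i) / (y ⬝ᵥ y))
      (stdSimplex ℝ ι) := by
  exact ContinuousOn.finset_inf'_apply hS fun i _ => ContinuousOn.div (by fun_prop)
    (by fun_prop) fun y hy => (dotProduct_self_pos_of_mem_stdSimplex hy).ne'

theorem diagonal_ite_mem_mulVec_of_eq_zero [DecidableEq ι] {S : Finset ι} {x : ι → ℝ}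
    (hx : ∀ i ∈ S, x i = 0) :
    (diagonal fun i => if i ∈ S then (0 : ℝ) else 1) *ᵥ x = x := by
  funext j
  by_cases hj : j ∈ S <;> simp [mulVec_diagonal, hj, hx]

end QuadraticForm

theorem stmt_1_general {n : ℕ} (A : Matrix (Fin n) (Fin n) ℝ) (hA : A.IsSymm)
    (S : Finset (Fin n)) (hS : S.Nonempty)
    (α : ℝ)
    (γ : ℝ)
    (hγ : γ = sSup ((fun y : Fin n → ℝ =>
        S.inf' hS fun i => (y ⬝ᵥ A.mulVec y - A.mulVec y i) / (y ⬝ᵥ y)) ''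
        {y : Fin n → ℝ | (∑ i, y i = 1 ∧ ∀ i, 0 ≤ y i) ∧ ∀ i, 0 < y i → i ∉ S}))
    (hαγ : γ < α)
    (x : Fin n → ℝ)
    (hx : x ∈ {y : Fin n → ℝ | ∑ i, y i = 1 ∧ ∀ i, 0 ≤ y i})
    (hmax : IsLocalMaxOn
      (fun y : Fin n → ℝ =>
        y ⬝ᵥ (A - α • Matrix.diagonal fun i => if i ∈ S then (0 : ℝ) else 1).mulVec y)
      {y : Fin n → ℝ | ∑ i, y i = 1 ∧ ∀ i, 0 ≤ y i} x) :
    ∃ i ∈ S, 0 < x i := by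
  rw [setOf_sum_eq_one_and_nonneg_eq_stdSimplex] at hx hmax
  by_contra! hxS
  have hx0 : ∀ i ∈ S, x i = 0 := fun i hi => (hxS i hi).antisymm (hx.1 i)
  have hbdd := (isCompact_stdSimplex ℝ (Fin n)).bddAbove_image
    (continuousOn_inf'_div_dotProduct_self A hS)
  rw [← setOf_sum_eq_one_and_nonneg_eq_stdSimplex] at hbdd
  have hqγ : (S.inf' hS fun i => (x ⬝ᵥ A *ᵥ x - (A *ᵥ x) i) / (x ⬝ᵥ x)) ≤ γ :=
    hγ ▸ le_csSup (hbdd.mono (image_mono fun _ hy => hy.1))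
      ⟨x, ⟨hx.symm, fun i hi hiS => (hxS i hiS).not_gt hi⟩, rfl⟩
  obtain ⟨i, hiS, hqi⟩ := S.exists_mem_eq_inf' hS
    fun i => (x ⬝ᵥ A *ᵥ x - (A *ᵥ x) i) / (x ⬝ᵥ x)
  have hlt : x ⬝ᵥ A *ᵥ x - (A *ᵥ x) i < α * (x ⬝ᵥ x) := by
    rw [← div_lt_iff₀ (dotProduct_self_pos_of_mem_stdSimplex hx), ← hqi]
    exact hqγ.trans_lt hαγ
  have hkkt := hmax.mulVec_apply_le_of_stdSimplex
    (hA.sub ((isSymm_diagonal _).smul α)) hx i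
  rw [sub_mulVec, smul_mulVec, diagonal_ite_mem_mulVec_of_eq_zero hx0] at hkkt
  simp only [Pi.sub_apply, Pi.smul_apply, smul_eq_mul, hx0 i hiS, mul_zero, sub_zero,
    dotProduct_sub, dotProduct_smul] at hkkt
  linarith

/-- If `α > γ_S = max_{x ∈ Δ_{V∖S}} min_{i ∈ S} (xᵀAx − (Ax)_i)/(xᵀx)` and `x` is a
local maximizer of `f_S^α(y) = yᵀ(A − α Î_S)y` on the simplex Δ, then `σ(x) ∩ S ≠ ∅`. -/
theorem stmt_1 {n : ℕ} (A : Matrix (Fin n) (Fin n) ℝ) (hA : A.IsSymm)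
    (hApos : ∀ i j, 0 ≤ A i j)
    (S : Finset (Fin n)) (hS : S.Nonempty) (hSc : Sᶜ.Nonempty)
    (α : ℝ) (hα0 : 0 < α)
    (γ : ℝ)
    (hγ : γ = sSup ((fun y : Fin n → ℝ =>
        S.inf' hS fun i => (y ⬝ᵥ A.mulVec y - A.mulVec y i) / (y ⬝ᵥ y)) ''
        {y : Fin n → ℝ | (∑ i, y i = 1 ∧ ∀ i, 0 ≤ y i) ∧ ∀ i, 0 < y i → i ∉ S}))
    (hαγ : γ < α)
    (x : Fin n → ℝ)
    (hx : x ∈ {y : Fin n → ℝ | ∑ i, y i = 1 ∧ ∀ i, 0 ≤ y i})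
    (hmax : IsLocalMaxOn
      (fun y : Fin n → ℝ =>
        y ⬝ᵥ (A - α • Matrix.diagonal fun i => if i ∈ S then (0 : ℝ) else 1).mulVec y)
      {y : Fin n → ℝ | ∑ i, y i = 1 ∧ ∀ i, 0 ≤ y i} x) :
    ∃ i ∈ S, 0 < x i :=
  stmt_1_general A hA S hS α γ hγ hαγ x hx hmax
end

section
/- Let S ⊆ V be nonempty with V∖S also nonempty, and define γ_S = max_{x ∈ Δ_{V∖S}} min_{i ∈ S} (xᵀAx − (Ax)_i)/(xᵀx). Then γ_S ≤ λ_max(A_{V∖S}), where λ_max(A_{V∖S}) is the largest eigenvalue of the principal submatrix of A indexed by the elements of V∖S. -/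
/-!
For `x` in the face `Δ_{V∖S}`, nonnegativity of `A` gives `(Ax)_i ≥ 0`, so every quotient in the
minimum is at most the Rayleigh quotient `xᵀAx / xᵀx`. As `x` vanishes on `S`, this is the Rayleigh
quotient of `A_{V∖S}` at the restriction of `x`, which the spectral theorem bounds by `λ_max`.
-/

open Matrix

theorem Finset.sum_coe_sort_of_eq_zero {ι M : Type*} [Fintype ι] [AddCommMonoid M]
    {T : Finset ι} {f : ι → M} (hf : ∀ i ∉ T, f i = 0) : ∑ i : T, f i = ∑ i, f i := by
  rw [Finset.sum_coe_sort]
  exact Finset.sum_subset (Finset.subset_univ T) fun i _ hi => hf i hi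

namespace Matrix

variable {m : Type*} [Fintype m]

theorem IsHermitian.dotProduct_mulVec_le_iSup_eigenvalues_mul [DecidableEq m]
    {B : Matrix m m ℝ} (hB : B.IsHermitian) (x : m → ℝ) :
    x ⬝ᵥ B *ᵥ x ≤ (⨆ j, hB.eigenvalues j) * (x ⬝ᵥ x) := by
  set U : Matrix m m ℝ := (hB.eigenvectorUnitary : Matrix m m ℝ)
  set y := star U *ᵥ x
  have hxU : x ᵥ* U = y := by
    rw [← mulVec_transpose, ← conjTranspose_eq_transpose_of_trivial]; rfl
  have hyy : y ⬝ᵥ y = x ⬝ᵥ x := by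
    calc y ⬝ᵥ y = (x ᵥ* U) ⬝ᵥ (star U *ᵥ x) := by rw [hxU]
      _ = x ⬝ᵥ x := by
        rw [← dotProduct_mulVec, mulVec_mulVec, mem_unitaryGroup_iff.mp hB.eigenvectorUnitary.2,
          one_mulVec]
  have hdiag : x ⬝ᵥ B *ᵥ x = ∑ j, hB.eigenvalues j * (y j * y j) := by
    conv_lhs => rw [hB.spectral_theorem, Unitary.conjStarAlgAut_apply]
    rw [← mulVec_mulVec, ← mulVec_mulVec, dotProduct_mulVec, hxU]
    simp only [dotProduct, mulVec_diagonal, Function.comp_apply, RCLike.ofReal_real_eq_id, id]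
    exact Finset.sum_congr rfl fun j _ => by ring
  have hbdd : BddAbove (Set.range hB.eigenvalues) := (Set.finite_range _).bddAbove
  rw [hdiag, ← hyy, dotProduct, Finset.mul_sum]
  exact Finset.sum_le_sum fun j _ =>
    mul_le_mul_of_nonneg_right (le_ciSup hbdd j) (mul_self_nonneg (y j))

theorem IsHermitian.diag_le_iSup_eigenvalues [DecidableEq m] {B : Matrix m m ℝ}
    (hB : B.IsHermitian) (k : m) : B k k ≤ ⨆ j, hB.eigenvalues j := by
  simpa [dotProduct, mulVec, Pi.single_apply] using
    hB.dotProduct_mulVec_le_iSup_eigenvalues_mul (Pi.single k 1)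

section Restriction

variable {R : Type*} [NonUnitalNonAssocSemiring R] {T : Finset m} {x : m → R}

theorem comp_val_dotProduct_comp_val (hx : ∀ i ∉ T, x i = 0) (y : m → R) :
    (x ∘ Subtype.val : T → R) ⬝ᵥ (y ∘ Subtype.val) = x ⬝ᵥ y :=
  Finset.sum_coe_sort_of_eq_zero (f := fun i => x i * y i) fun i hi => by simp [hx i hi]

theorem submatrix_mulVec_comp_val {l : Type*} (A : Matrix m m R) (f : l → m)
    (hx : ∀ i ∉ T, x i = 0) :
    A.submatrix f (Subtype.val : T → m) *ᵥ (x ∘ Subtype.val) = (A *ᵥ x) ∘ f :=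
  funext fun i => Finset.sum_coe_sort_of_eq_zero (f := fun j => A (f i) j * x j) fun j hj => by
    simp [hx j hj]

theorem comp_val_dotProduct_submatrix_mulVec (A : Matrix m m R) (hx : ∀ i ∉ T, x i = 0) :
    (x ∘ Subtype.val : T → R) ⬝ᵥ
        A.submatrix Subtype.val (Subtype.val : T → m) *ᵥ (x ∘ Subtype.val) = x ⬝ᵥ A *ᵥ x := by
  rw [submatrix_mulVec_comp_val A _ hx, comp_val_dotProduct_comp_val hx]

end Restriction

theorem quotient_sub_mulVec_le_iSup_eigenvalues [DecidableEq m] {T : Finset m}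
    {A : Matrix m m ℝ} (hA : ∀ i j, 0 ≤ A i j)
    (hT : (A.submatrix Subtype.val (Subtype.val : T → m)).IsHermitian) {x : m → ℝ}
    (hx₀ : 0 ≤ x) (hx : x ≠ 0) (hxT : ∀ i ∉ T, x i = 0) (i : m) :
    (x ⬝ᵥ A *ᵥ x - (A *ᵥ x) i) / (x ⬝ᵥ x) ≤ ⨆ j, hT.eigenvalues j := by
  have hxx : 0 < x ⬝ᵥ x :=
    (dotProduct_nonneg_of_nonneg hx₀ hx₀).lt_of_ne' (dotProduct_self_eq_zero.not.mpr hx)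
  have hAx : 0 ≤ (A *ᵥ x) i := dotProduct_nonneg_of_nonneg (hA i) hx₀
  have hray := hT.dotProduct_mulVec_le_iSup_eigenvalues_mul (x ∘ Subtype.val)
  rw [comp_val_dotProduct_submatrix_mulVec A hxT, comp_val_dotProduct_comp_val hxT] at hray
  rw [div_le_iff₀ hxx]
  linarith

end Matrix

theorem stmt_2_general {n : ℕ} (A : Matrix (Fin n) (Fin n) ℝ)
    (hApos : ∀ i j, 0 ≤ A i j)
    (S : Finset (Fin n)) (hS : S.Nonempty) (hSc : Sᶜ.Nonempty)
    (γ : ℝ)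
    (hγ : γ = sSup ((fun y : Fin n → ℝ =>
        S.inf' hS fun i => (y ⬝ᵥ A.mulVec y - A.mulVec y i) / (y ⬝ᵥ y)) ''
        {y : Fin n → ℝ | (∑ i, y i = 1 ∧ ∀ i, 0 ≤ y i) ∧ ∀ i, 0 < y i → i ∉ S}))
    (B : Matrix {i : Fin n // i ∈ Sᶜ} {i : Fin n // i ∈ Sᶜ} ℝ)
    (hB : B = A.submatrix Subtype.val Subtype.val)
    (hherm : B.IsHermitian) :
    γ ≤ ⨆ j, hherm.eigenvalues j := by
  subst hB hγ
  obtain ⟨k, hk⟩ := hSc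
  refine Real.sSup_le ?_ ((hApos k k).trans (hherm.diag_le_iSup_eigenvalues ⟨k, hk⟩))
  rintro _ ⟨x, ⟨⟨hsum, hx₀⟩, hsupp⟩, rfl⟩
  obtain ⟨i, hi⟩ := id hS
  refine (Finset.inf'_le _ hi).trans
    (quotient_sub_mulVec_le_iSup_eigenvalues hApos hherm hx₀ ?_ ?_ i)
  · rintro rfl
    simp at hsum
  · intro j hj
    rw [Finset.mem_compl, not_not] at hj
    exact le_antisymm (not_lt.mp fun hpos => hsupp j hpos hj) (hx₀ j)

/-- `γ_S = max_{x ∈ Δ_{V∖S}} min_{i ∈ S} (xᵀAx − (Ax)_i)/(xᵀx)` is bounded above by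
`λ_max(A_{V∖S})`, the largest eigenvalue of the principal submatrix of `A` indexed
by the elements of `V∖S`. -/
theorem stmt_2 {n : ℕ} (A : Matrix (Fin n) (Fin n) ℝ) (hA : A.IsSymm)
    (hApos : ∀ i j, 0 ≤ A i j)
    (S : Finset (Fin n)) (hS : S.Nonempty) (hSc : Sᶜ.Nonempty)
    (γ : ℝ)
    (hγ : γ = sSup ((fun y : Fin n → ℝ =>
        S.inf' hS fun i => (y ⬝ᵥ A.mulVec y - A.mulVec y i) / (y ⬝ᵥ y)) ''
        {y : Fin n → ℝ | (∑ i, y i = 1 ∧ ∀ i, 0 ≤ y i) ∧ ∀ i, 0 < y i → i ∉ S}))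
    (B : Matrix {i : Fin n // i ∈ Sᶜ} {i : Fin n // i ∈ Sᶜ} ℝ)
    (hB : B = A.submatrix Subtype.val Subtype.val)
    (hherm : B.IsHermitian) :
    γ ≤ ⨆ j, hherm.eigenvalues j :=
  stmt_2_general A hApos S hS hSc γ hγ B hB hherm
end

section
/- Let S ⊆ V be nonempty with V∖S also nonempty. If α > λ_max(A_{V∖S}), the largest eigenvalue of the principal submatrix of A indexed by the elements of V∖S, then every local maximizer x of f_S^α on Δ satisfies σ(x) ∩ S ≠ ∅; that is, the support of every local solution necessarily contains elements of S. -/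
/-!
If a local maximizer `x` vanished on `S`, then on its support the penalty `α Î_S` is `α` times
the identity, so `f x ≤ (λ_max(A_{V∖S}) − α) ‖x‖² < 0`. Sliding from `x` towards a vertex `e_j`
with `j ∈ S` only involves row and column `j` of `A − α Î_S`, which are those of the nonnegative
`A`; hence `f((1 − t) x + t e_j) ≥ (1 − t)² f x > f x` for small `t > 0`.
-/

open Matrix BigOperators

theorem Convex.not_isLocalMaxOn_of_forall_lt_lineMap {E β : Type*} [AddCommGroup E] [Module ℝ E]
    [TopologicalSpace E] [IsTopologicalAddGroup E] [ContinuousSMul ℝ E] [Preorder β]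
    {s : Set E} {f : E → β} (hs : Convex ℝ s) {x y : E} (hx : x ∈ s) (hy : y ∈ s)
    (h : ∀ t ∈ Set.Ioo (0 : ℝ) 1, f x < f (AffineMap.lineMap x y t)) :
    ¬ IsLocalMaxOn f s x := by
  intro hmax
  have hseg : IsLocalMaxOn (f ∘ AffineMap.lineMap x y) (Set.Icc (0 : ℝ) 1) 0 := by
    refine IsLocalMaxOn.comp_continuousOn ?_ (hs.mapsTo_lineMap hx hy).subset_preimage
      AffineMap.lineMap_continuous.continuousOn ⟨le_rfl, zero_le_one⟩
    rwa [AffineMap.lineMap_apply_zero]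
  have := left_nhdsWithin_Ioo_neBot (zero_lt_one' ℝ)
  obtain ⟨t, hle, ht⟩ := ((hseg.filter_mono (nhdsWithin_mono _ Set.Ioo_subset_Icc_self)).and
    self_mem_nhdsWithin).exists
  exact (h t ht).not_ge (by simpa using hle)

theorem Fintype.sum_subtype_eq_sum_of_eq_zero {ι M : Type*} [Fintype ι] {p : ι → Prop}
    [Fintype (Subtype p)] [AddCommMonoid M] {g : ι → M}
    (hg : ∀ i, ¬ p i → g i = 0) : ∑ i : Subtype p, g i = ∑ i, g i := by
  classical
  rw [← Finset.sum_subtype (Finset.univ.filter p) (by simp) g,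
    Finset.sum_filter_of_ne fun i _ h => by_contra fun hp => h (hg i hp)]

namespace Matrix

open scoped MatrixOrder in
theorem IsHermitian.dotProduct_mulVec_le_iSup_eigenvalues {m : Type*} [Fintype m]
    [DecidableEq m] {B : Matrix m m ℝ} (hB : B.IsHermitian) (v : m → ℝ) :
    v ⬝ᵥ B *ᵥ v ≤ (⨆ j, hB.eigenvalues j) * (v ⬝ᵥ v) := by
  have hle : B ≤ algebraMap ℝ (Matrix m m ℝ) (⨆ j, hB.eigenvalues j) := by
    refine le_algebraMap_of_spectrum_le (fun r hr => ?_) hB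
    obtain ⟨j, rfl⟩ := hB.spectrum_real_eq_range_eigenvalues ▸ hr
    exact le_ciSup (Set.finite_range _).bddAbove j
  simpa [sub_mulVec, Algebra.algebraMap_eq_smul_one, smul_mulVec] using
    (Matrix.le_iff.mp hle).dotProduct_mulVec_nonneg v

variable {ι : Type*} [Fintype ι] {p : ι → Prop} [Fintype (Subtype p)]

theorem dotProduct_mulVec_lineMap {R : Type*} [CommRing R] (M : Matrix ι ι R) (x y : ι → R)
    (t : R) :
    AffineMap.lineMap x y t ⬝ᵥ M *ᵥ AffineMap.lineMap x y t =
      (1 - t) ^ 2 * (x ⬝ᵥ M *ᵥ x) + t * (1 - t) * (x ⬝ᵥ M *ᵥ y + y ⬝ᵥ M *ᵥ x) +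
        t ^ 2 * (y ⬝ᵥ M *ᵥ y) := by
  simp only [AffineMap.lineMap_apply_module, mulVec_add, mulVec_smul, dotProduct_add,
    add_dotProduct, smul_dotProduct, dotProduct_smul, smul_eq_mul]
  ring

theorem dotProduct_mulVec_lt_lineMap {M : Matrix ι ι ℝ} {x y : ι → ℝ}
    (hx : x ⬝ᵥ M *ᵥ x < 0) (hxy : 0 ≤ x ⬝ᵥ M *ᵥ y) (hyx : 0 ≤ y ⬝ᵥ M *ᵥ x)
    (hy : 0 ≤ y ⬝ᵥ M *ᵥ y) {t : ℝ} (ht : t ∈ Set.Ioo 0 1) :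
    x ⬝ᵥ M *ᵥ x < AffineMap.lineMap x y t ⬝ᵥ M *ᵥ AffineMap.lineMap x y t := by
  obtain ⟨ht0, ht1⟩ := ht
  rw [dotProduct_mulVec_lineMap]
  have hcross : 0 ≤ t * (1 - t) * (x ⬝ᵥ M *ᵥ y + y ⬝ᵥ M *ᵥ x) := by
    have : 0 ≤ 1 - t := by linarith
    positivity
  have hshrink : x ⬝ᵥ M *ᵥ x < (1 - t) ^ 2 * (x ⬝ᵥ M *ᵥ x) := by
    nlinarith [mul_pos (mul_pos ht0 (by linarith : (0 : ℝ) < 2 - t)) (neg_pos.mpr hx)]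
  nlinarith [mul_nonneg (sq_nonneg t) hy]

theorem dotProduct_mulVec_submatrix_val {R : Type*} [CommRing R] (A : Matrix ι ι R)
    {x : ι → R} (hx : ∀ i, ¬ p i → x i = 0) :
    (fun i : Subtype p => x i) ⬝ᵥ
        A.submatrix Subtype.val Subtype.val *ᵥ (fun i : Subtype p => x i) =
      x ⬝ᵥ A *ᵥ x := by
  have hrow i : ∑ j : Subtype p, A i j * x j = ∑ j, A i j * x j :=
    Fintype.sum_subtype_eq_sum_of_eq_zero (g := fun j => A i j * x j) fun j hj => by
      rw [hx j hj, mul_zero]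
  simp only [dotProduct, mulVec, submatrix_apply, hrow]
  exact Fintype.sum_subtype_eq_sum_of_eq_zero (g := fun i => x i * ∑ j, A i j * x j)
    fun i hi => by rw [hx i hi, zero_mul]

variable [DecidableEq ι]

theorem not_isLocalMaxOn_dotProduct_mulVec_stdSimplex {M : Matrix ι ι ℝ} {x : ι → ℝ}
    (hx : x ∈ stdSimplex ℝ ι) (hneg : x ⬝ᵥ M *ᵥ x < 0) {j : ι} (hrow : ∀ i, 0 ≤ M j i)
    (hcol : ∀ i, 0 ≤ M i j) :
    ¬ IsLocalMaxOn (fun y => y ⬝ᵥ M *ᵥ y) (stdSimplex ℝ ι) x := by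
  refine (convex_stdSimplex ℝ ι).not_isLocalMaxOn_of_forall_lt_lineMap hx
    (single_mem_stdSimplex ℝ j) fun t ht => dotProduct_mulVec_lt_lineMap hneg ?_ ?_ ?_ ht
  · rw [mulVec_single_one]
    exact dotProduct_nonneg_of_nonneg hx.1 hcol
  · rw [single_one_dotProduct]
    exact dotProduct_nonneg_of_nonneg hrow hx.1
  · rw [mulVec_single_one, single_one_dotProduct]
    exact hcol j

theorem dotProduct_mulVec_sub_smul_diagonal_neg (A : Matrix ι ι ℝ) {d : ι → ℝ}
    (hd : ∀ i, p i → d i = 1)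
    (hB : (A.submatrix Subtype.val Subtype.val : Matrix (Subtype p) (Subtype p) ℝ).IsHermitian)
    {α : ℝ} (hα : ⨆ j, hB.eigenvalues j < α) {x : ι → ℝ} (hx0 : x ≠ 0)
    (hx : ∀ i, ¬ p i → x i = 0) :
    x ⬝ᵥ (A - α • diagonal d) *ᵥ x < 0 := by
  set v : Subtype p → ℝ := fun i => x i
  have hdx : diagonal d *ᵥ x = x := by
    ext i
    by_cases hi : p i <;> simp [mulVec_diagonal, hd, hx, hi]
  have hvv : v ⬝ᵥ v = x ⬝ᵥ x :=
    Fintype.sum_subtype_eq_sum_of_eq_zero (g := fun i => x i * x i) fun i hi => by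
      rw [hx i hi, zero_mul]
  have hpos : 0 < x ⬝ᵥ x :=
    (Fintype.sum_nonneg fun i => mul_self_nonneg (x i)).lt_of_ne'
      (dotProduct_self_eq_zero.not.mpr hx0)
  calc x ⬝ᵥ (A - α • diagonal d) *ᵥ x
      = v ⬝ᵥ A.submatrix Subtype.val Subtype.val *ᵥ v - α * (x ⬝ᵥ x) := by
        rw [sub_mulVec, smul_mulVec, hdx, dotProduct_sub, dotProduct_smul, smul_eq_mul,
          dotProduct_mulVec_submatrix_val A hx]
    _ ≤ (⨆ j, hB.eigenvalues j) * (x ⬝ᵥ x) - α * (x ⬝ᵥ x) := by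
        rw [← hvv]
        gcongr
        exact hB.dotProduct_mulVec_le_iSup_eigenvalues v
    _ < 0 := by
        rw [← sub_mul]
        exact mul_neg_of_neg_of_pos (sub_neg.mpr hα) hpos

end Matrix

theorem stmt_3_general {n : ℕ} (A : Matrix (Fin n) (Fin n) ℝ)
    (hApos : ∀ i j, 0 ≤ A i j)
    (S : Finset (Fin n)) (hS : S.Nonempty)
    (B : Matrix {i : Fin n // i ∈ Sᶜ} {i : Fin n // i ∈ Sᶜ} ℝ)
    (hB : B = A.submatrix Subtype.val Subtype.val)
    (hherm : B.IsHermitian)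
    (α : ℝ) (hα : (⨆ j, hherm.eigenvalues j) < α)
    (x : Fin n → ℝ)
    (hx : x ∈ {y : Fin n → ℝ | ∑ i, y i = 1 ∧ ∀ i, 0 ≤ y i})
    (hmax : IsLocalMaxOn
      (fun y : Fin n → ℝ =>
        y ⬝ᵥ (A - α • Matrix.diagonal fun i => if i ∈ S then (0 : ℝ) else 1).mulVec y)
      {y : Fin n → ℝ | ∑ i, y i = 1 ∧ ∀ i, 0 ≤ y i} x) :
    ∃ i ∈ S, 0 < x i := by
  by_contra! hxS
  subst hB
  obtain ⟨hsum, hnonneg⟩ := hx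
  have hvanish : ∀ i, i ∉ Sᶜ → x i = 0 := fun i hi =>
    le_antisymm (hxS i (by simpa using hi)) (hnonneg i)
  have hx0 : x ≠ 0 := by
    rintro rfl
    simp at hsum
  have hneg := dotProduct_mulVec_sub_smul_diagonal_neg A
    (d := fun i => if i ∈ S then 0 else 1) (fun i hi => if_neg (Finset.mem_compl.mp hi))
    hherm hα hx0 hvanish
  obtain ⟨j, hj⟩ := hS
  refine not_isLocalMaxOn_dotProduct_mulVec_stdSimplex ⟨hnonneg, hsum⟩ hneg (j := j)
    (fun i => ?_) (fun i => ?_) ?_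
  · rcases eq_or_ne j i with rfl | hji
    · simpa [hj] using hApos j j
    · simpa [hji] using hApos j i
  · rcases eq_or_ne i j with rfl | hij
    · simpa [hj] using hApos i i
    · simpa [hij] using hApos i j
  · convert hmax using 1
    ext y
    simp [stdSimplex, and_comm]

/-- If `α > λ_max(A_{V∖S})`, the largest eigenvalue of the principal submatrix of `A`
indexed by `V∖S`, then every local maximizer `x` of `f_S^α(y) = yᵀ(A − α Î_S)y` on the
standard simplex Δ satisfies `σ(x) ∩ S ≠ ∅`. -/
theorem stmt_3 {n : ℕ} (A : Matrix (Fin n) (Fin n) ℝ) (hA : A.IsSymm)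
    (hApos : ∀ i j, 0 ≤ A i j)
    (S : Finset (Fin n)) (hS : S.Nonempty) (hSc : Sᶜ.Nonempty)
    (B : Matrix {i : Fin n // i ∈ Sᶜ} {i : Fin n // i ∈ Sᶜ} ℝ)
    (hB : B = A.submatrix Subtype.val Subtype.val)
    (hherm : B.IsHermitian)
    (α : ℝ) (hα : (⨆ j, hherm.eigenvalues j) < α)
    (x : Fin n → ℝ)
    (hx : x ∈ {y : Fin n → ℝ | ∑ i, y i = 1 ∧ ∀ i, 0 ≤ y i})
    (hmax : IsLocalMaxOn
      (fun y : Fin n → ℝ =>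
        y ⬝ᵥ (A - α • Matrix.diagonal fun i => if i ∈ S then (0 : ℝ) else 1).mulVec y)
      {y : Fin n → ℝ | ∑ i, y i = 1 ∧ ∀ i, 0 ≤ y i} x) :
    ∃ i ∈ S, 0 < x i :=
  stmt_3_general A hApos S hS B hB hherm α hα x hx hmax
end

section
/- Let W be symmetric with C + W_{ij} > 0 for all i, j, let x ∈ Δ, and let y be the discrete-time replicator update y_i = x_i·(C + (Wx)_i)/(C + xᵀWx) (the denominator is positive under these hypotheses). Then yᵀWy ≥ xᵀWx, with equality if and only if y = x; that is, the quadratic form xᵀWx is strictly increasing along any nonstationary trajectory of the discrete-time replicator dynamics. -/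
/-!
Put `A i j = C + W i j`, a symmetric matrix with positive entries; on the simplex
`zᵀAz = C + zᵀWz` and `Ax = C + Wx`, so the update is `y i = x i * r i` with
`r i = (Ax)_i / xᵀAx`. From `log t ≤ t - 1` we get `r i * r j ≥ 1 + log (r i) + log (r j)`;
weighting by `A i j * x i * x j ≥ 0` and summing, symmetry of `A` gives
`yᵀAy ≥ xᵀAx + 2 xᵀAx · KL(y ‖ x)`. The divergence is nonnegative and vanishes only when
`r i = 1` wherever `x i ≠ 0`, that is, when `y = x`.
-/

open Matrix BigOperators

open Real InformationTheory

variable {ι : Type*} [Fintype ι]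

noncomputable def replicatorStep (A : Matrix ι ι ℝ) (x : ι → ℝ) : ι → ℝ :=
  fun i => x i * (A *ᵥ x) i / (x ⬝ᵥ A *ᵥ x)

noncomputable def replicatorRate (A : Matrix ι ι ℝ) (x : ι → ℝ) : ι → ℝ :=
  fun i => (A *ᵥ x) i / (x ⬝ᵥ A *ᵥ x)

theorem replicatorStep_eq_mul_replicatorRate (A : Matrix ι ι ℝ) (x : ι → ℝ) :
    replicatorStep A x = x * replicatorRate A x :=
  funext fun _ => mul_div_assoc _ _ _

theorem one_add_log_add_log_le_mul {a b : ℝ} (ha : 0 < a) (hb : 0 < b) :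
    1 + log a + log b ≤ a * b := by
  have := log_le_sub_one_of_pos (mul_pos ha hb)
  rw [log_mul ha.ne' hb.ne'] at this
  linarith

theorem dotProduct_mulVec_eq_sum_sum (A : Matrix ι ι ℝ) (x z : ι → ℝ) :
    x ⬝ᵥ A *ᵥ z = ∑ i, ∑ j, A i j * x i * z j := by
  simp only [dotProduct, mulVec, Finset.mul_sum]
  exact Finset.sum_congr rfl fun i _ => Finset.sum_congr rfl fun j _ => by ring

theorem Matrix.IsSymm.quadForm_add_two_mul_sum_log_le {A : Matrix ι ι ℝ} (hA : A.IsSymm)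
    (hA0 : ∀ i j, 0 ≤ A i j) {x r : ι → ℝ} (hx : 0 ≤ x) (hr : ∀ i, 0 < r i) :
    x ⬝ᵥ A *ᵥ x + 2 * ∑ i, x i * (A *ᵥ x) i * log (r i) ≤ (x * r) ⬝ᵥ A *ᵥ (x * r) := by
  have hrow : ∑ i, x i * (A *ᵥ x) i * log (r i) = ∑ i, ∑ j, A i j * x i * x j * log (r i) := by
    simp only [mulVec, dotProduct, Finset.mul_sum, Finset.sum_mul]
    exact Finset.sum_congr rfl fun i _ => Finset.sum_congr rfl fun j _ => by ring
  have hcol : ∑ i, x i * (A *ᵥ x) i * log (r i) = ∑ i, ∑ j, A i j * x i * x j * log (r j) := by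
    rw [hrow, Finset.sum_comm]
    exact Finset.sum_congr rfl fun i _ => Finset.sum_congr rfl fun j _ => by
      rw [hA.apply i j]; ring
  calc x ⬝ᵥ A *ᵥ x + 2 * ∑ i, x i * (A *ᵥ x) i * log (r i)
      = ∑ i, ∑ j, A i j * x i * x j * (1 + log (r i) + log (r j)) := by
        rw [two_mul]
        nth_rw 1 [hrow]
        rw [hcol, dotProduct_mulVec_eq_sum_sum]
        simp only [← Finset.sum_add_distrib]
        exact Finset.sum_congr rfl fun i _ => Finset.sum_congr rfl fun j _ => by ring
    _ ≤ ∑ i, ∑ j, A i j * x i * x j * (r i * r j) := by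
        gcongr with i _ j _
        · exact mul_nonneg (mul_nonneg (hA0 i j) (hx i)) (hx j)
        · exact one_add_log_add_log_le_mul (hr i) (hr j)
    _ = (x * r) ⬝ᵥ A *ᵥ (x * r) := by
        rw [dotProduct_mulVec_eq_sum_sum]
        exact Finset.sum_congr rfl fun i _ => Finset.sum_congr rfl fun j _ => by
          simp only [Pi.mul_apply]; ring

theorem mul_klFun_eq_zero_iff {a r : ℝ} (hr : 0 ≤ r) : a * klFun r = 0 ↔ a * r = a := by
  rw [mul_eq_zero, klFun_eq_zero_iff hr, ← sub_eq_zero (a := r), ← mul_eq_zero, mul_sub_one,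
    sub_eq_zero]

theorem sum_mul_klFun_eq (x r : ι → ℝ) :
    ∑ i, x i * klFun (r i) = ∑ i, x i * r i * log (r i) + ∑ i, x i - ∑ i, x i * r i := by
  simp only [klFun, ← Finset.sum_add_distrib, ← Finset.sum_sub_distrib]
  exact Finset.sum_congr rfl fun i _ => by ring

theorem ne_zero_of_sum_eq_one {x : ι → ℝ} (h : ∑ i, x i = 1) : x ≠ 0 := by
  rintro rfl
  simp at h

theorem mulVec_pos_of_pos {A : Matrix ι ι ℝ} (hA : ∀ i j, 0 < A i j) {x : ι → ℝ} (hx0 : 0 ≤ x)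
    (hx : x ≠ 0) (i : ι) : 0 < (A *ᵥ x) i := by
  obtain ⟨j, hj⟩ := Function.ne_iff.mp hx
  exact Finset.sum_pos' (fun k _ => mul_nonneg (hA i k).le (hx0 k))
    ⟨j, Finset.mem_univ j, mul_pos (hA i j) ((hx0 j).lt_of_ne' hj)⟩

theorem dotProduct_mulVec_self_pos_of_pos {A : Matrix ι ι ℝ} (hA : ∀ i j, 0 < A i j)
    {x : ι → ℝ} (hx0 : 0 ≤ x) (hx : x ≠ 0) : 0 < x ⬝ᵥ A *ᵥ x := by
  obtain ⟨j, hj⟩ := Function.ne_iff.mp hx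
  exact Finset.sum_pos' (fun i _ => mul_nonneg (hx0 i) (mulVec_pos_of_pos hA hx0 hx i).le)
    ⟨j, Finset.mem_univ j, mul_pos ((hx0 j).lt_of_ne' hj) (mulVec_pos_of_pos hA hx0 hx j)⟩

theorem sum_replicatorStep {A : Matrix ι ι ℝ} {x : ι → ℝ} (hx : x ⬝ᵥ A *ᵥ x ≠ 0) :
    ∑ i, replicatorStep A x i = 1 := by
  simp only [replicatorStep, ← Finset.sum_div]
  exact div_self hx

section Simplex

variable {A : Matrix ι ι ℝ} {x : ι → ℝ}

/-- Equals the Kullback–Leibler divergence `∑ i, y i * log (y i / x i)` of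
`y = replicatorStep A x` from `x`, because `∑ i, y i = ∑ i, x i`. -/
noncomputable def replicatorDivergence (A : Matrix ι ι ℝ) (x : ι → ℝ) : ℝ :=
  ∑ i, x i * klFun (replicatorRate A x i)

theorem replicatorRate_pos (hA0 : ∀ i j, 0 < A i j) (hx0 : 0 ≤ x) (hx1 : ∑ i, x i = 1)
    (i : ι) : 0 < replicatorRate A x i := by
  have hx := ne_zero_of_sum_eq_one hx1
  exact div_pos (mulVec_pos_of_pos hA0 hx0 hx i) (dotProduct_mulVec_self_pos_of_pos hA0 hx0 hx)

theorem replicatorDivergence_nonneg (hA0 : ∀ i j, 0 < A i j) (hx0 : 0 ≤ x)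
    (hx1 : ∑ i, x i = 1) : 0 ≤ replicatorDivergence A x :=
  Finset.sum_nonneg fun i _ =>
    mul_nonneg (hx0 i) (klFun_nonneg (replicatorRate_pos hA0 hx0 hx1 i).le)

theorem replicatorDivergence_eq_zero_iff (hA0 : ∀ i j, 0 < A i j) (hx0 : 0 ≤ x)
    (hx1 : ∑ i, x i = 1) :
    replicatorDivergence A x = 0 ↔ replicatorStep A x = x := by
  have hr i := (replicatorRate_pos hA0 hx0 hx1 i).le
  rw [replicatorDivergence, Finset.sum_eq_zero_iff_of_nonneg, replicatorStep_eq_mul_replicatorRate,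
    funext_iff]
  · simp only [Finset.mem_univ, true_implies, Pi.mul_apply]
    exact forall_congr' fun i => mul_klFun_eq_zero_iff (hr i)
  · exact fun i _ => mul_nonneg (hx0 i) (klFun_nonneg (hr i))

theorem quadForm_add_replicatorDivergence_le (hA : A.IsSymm) (hA0 : ∀ i j, 0 < A i j)
    (hx0 : 0 ≤ x) (hx1 : ∑ i, x i = 1) :
    x ⬝ᵥ A *ᵥ x + 2 * (x ⬝ᵥ A *ᵥ x) * replicatorDivergence A x ≤
      replicatorStep A x ⬝ᵥ A *ᵥ replicatorStep A x := by
  set S := x ⬝ᵥ A *ᵥ x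
  set r := replicatorRate A x
  have hSpos : 0 < S := dotProduct_mulVec_self_pos_of_pos hA0 hx0 (ne_zero_of_sum_eq_one hx1)
  have hxr : ∑ i, x i * r i = 1 := by
    rw [← sum_replicatorStep hSpos.ne', replicatorStep_eq_mul_replicatorRate]
    rfl
  have hkl : S * replicatorDivergence A x = ∑ i, x i * (A *ᵥ x) i * log (r i) := by
    rw [replicatorDivergence, sum_mul_klFun_eq, hxr, hx1, add_sub_cancel_right, Finset.mul_sum]
    refine Finset.sum_congr rfl fun i _ => ?_
    have hSr : S * r i = (A *ᵥ x) i := mul_div_cancel₀ _ hSpos.ne'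
    linear_combination x i * log (r i) * hSr
  rw [replicatorStep_eq_mul_replicatorRate, mul_assoc, hkl]
  exact hA.quadForm_add_two_mul_sum_log_le (fun i j => (hA0 i j).le) hx0
    (replicatorRate_pos hA0 hx0 hx1)

theorem quadForm_le_replicatorStep (hA : A.IsSymm) (hA0 : ∀ i j, 0 < A i j) (hx0 : 0 ≤ x)
    (hx1 : ∑ i, x i = 1) :
    x ⬝ᵥ A *ᵥ x ≤ replicatorStep A x ⬝ᵥ A *ᵥ replicatorStep A x := by
  have hS := dotProduct_mulVec_self_pos_of_pos hA0 hx0 (ne_zero_of_sum_eq_one hx1)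
  have hD := replicatorDivergence_nonneg hA0 hx0 hx1
  have := quadForm_add_replicatorDivergence_le hA hA0 hx0 hx1
  nlinarith

theorem replicatorStep_quadForm_eq_iff (hA : A.IsSymm) (hA0 : ∀ i j, 0 < A i j) (hx0 : 0 ≤ x)
    (hx1 : ∑ i, x i = 1) :
    replicatorStep A x ⬝ᵥ A *ᵥ replicatorStep A x = x ⬝ᵥ A *ᵥ x ↔ replicatorStep A x = x := by
  refine ⟨fun h => ?_, fun h => by rw [h]⟩
  have hS := dotProduct_mulVec_self_pos_of_pos hA0 hx0 (ne_zero_of_sum_eq_one hx1)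
  have hD := replicatorDivergence_nonneg hA0 hx0 hx1
  have := quadForm_add_replicatorDivergence_le hA hA0 hx0 hx1
  rw [← replicatorDivergence_eq_zero_iff hA0 hx0 hx1]
  nlinarith

end Simplex

theorem const_add_mulVec_apply (C : ℝ) (W : Matrix ι ι ℝ) (z : ι → ℝ) (i : ι) :
    ((of fun i j => C + W i j) *ᵥ z) i = C * ∑ j, z j + (W *ᵥ z) i := by
  simp only [mulVec, dotProduct, of_apply, add_mul, Finset.sum_add_distrib, Finset.mul_sum]

theorem dotProduct_const_add_mulVec (C : ℝ) (W : Matrix ι ι ℝ) (z : ι → ℝ) :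
    z ⬝ᵥ (of fun i j => C + W i j) *ᵥ z = C * (∑ i, z i) ^ 2 + z ⬝ᵥ W *ᵥ z := by
  simp only [dotProduct, const_add_mulVec_apply, mul_add, Finset.sum_add_distrib, ← Finset.sum_mul]
  ring

/-- Discrete-time Fundamental Theorem of Natural Selection: for symmetric `W` with
`C + W_{ij} > 0` for all `i, j` and `x ∈ Δ`, the replicator update
`y_i = x_i·(C + (Wx)_i)/(C + xᵀWx)` satisfies `yᵀWy ≥ xᵀWx`, with equality
if and only if `y = x`. -/
theorem stmt_10 {n : ℕ} (W : Matrix (Fin n) (Fin n) ℝ) (hW : W.IsSymm) (C : ℝ)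
    (hC : ∀ i j, 0 < C + W i j)
    (x : Fin n → ℝ)
    (hx : x ∈ {z : Fin n → ℝ | ∑ i, z i = 1 ∧ ∀ i, 0 ≤ z i})
    (y : Fin n → ℝ)
    (hy : y = fun i => x i * (C + W.mulVec x i) / (C + x ⬝ᵥ W.mulVec x)) :
    x ⬝ᵥ W.mulVec x ≤ y ⬝ᵥ W.mulVec y ∧
      (y ⬝ᵥ W.mulVec y = x ⬝ᵥ W.mulVec x ↔ y = x) := by
  obtain ⟨hx1, hx0⟩ := hx
  set A : Matrix (Fin n) (Fin n) ℝ := of fun i j => C + W i j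
  have hA : A.IsSymm := IsSymm.ext fun i j => by simp only [A, of_apply, hW.apply i j]
  have hquad (z : Fin n → ℝ) (hz : ∑ i, z i = 1) : z ⬝ᵥ A *ᵥ z = C + z ⬝ᵥ W *ᵥ z := by
    rw [dotProduct_const_add_mulVec, hz, one_pow, mul_one]
  have hstep : y = replicatorStep A x := by
    subst hy
    funext i
    rw [replicatorStep, hquad x hx1, const_add_mulVec_apply, hx1, mul_one]
  have hS := dotProduct_mulVec_self_pos_of_pos hC hx0 (ne_zero_of_sum_eq_one hx1)
  have hy1 : ∑ i, y i = 1 := hstep ▸ sum_replicatorStep hS.ne'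
  constructor
  · have := quadForm_le_replicatorStep hA hC hx0 hx1
    rw [← hstep, hquad x hx1, hquad y hy1] at this
    linarith
  · have := replicatorStep_quadForm_eq_iff hA hC hx0 hx1
    rwa [← hstep, hquad x hx1, hquad y hy1, add_right_inj] at this
end
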